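/- The LP-relaxation lower bound is explicit: the LP relaxation's optimal value equals sum over (i,t) of d_{i,t} · min over t' ∈ {1,…,t−L_i} of (C_{i,t'} + h_i(t − t') + A_i/M). -/
import Mathlib


open Finset

/-- Total cost of the paper's formulation. -/
noncomputable def mipCost (P T : ℕ) (L : ℕ → ℕ) (C : ℕ → ℕ → ℝ) (A h : ℕ → ℝ)
    (Q Y : ℕ → ℕ → ℕ → ℝ) : ℝ :=
  ∑ i ∈ Icc 1 P, ∑ t ∈ Icc (L i + 1) T, ∑ t' ∈ Icc 1 (t - L i),
    (C i t' * Q i t t' + A i * Y i t t' + h i * ((t : ℝ) - (t' : ℝ)) * Q i t t')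

/-- LP relaxation feasibility (Y ∈ [0,1]). -/
def lpFeasible (P T : ℕ) (L : ℕ → ℕ) (d : ℕ → ℕ → ℝ) (M : ℝ)
    (Q Y : ℕ → ℕ → ℕ → ℝ) : Prop :=
  (∀ i t t', 0 ≤ Q i t t') ∧
  (∀ i t t', 0 ≤ Y i t t' ∧ Y i t t' ≤ 1) ∧
  (∀ i ∈ Icc 1 P, ∀ t ∈ Icc (L i + 1) T,
    d i t ≤ ∑ t' ∈ Icc 1 (t - L i), Q i t t') ∧
  (∀ i ∈ Icc 1 P, ∀ t ∈ Icc (L i + 1) T, ∀ t' ∈ Icc 1 (t - L i),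
    Q i t t' ≤ M * Y i t t')

/-- The LP relaxation's optimal value equals
`∑_{i,t} d i t · min_{1 ≤ t' ≤ t - L i} (C i t' + h i (t-t') + A i / M)`. -/
theorem lp_relaxation_explicit_value (P T : ℕ) (L : ℕ → ℕ)
    (C : ℕ → ℕ → ℝ) (A h : ℕ → ℝ) (d : ℕ → ℕ → ℝ) (M : ℝ)
    (hM : 0 < M) (hd : ∀ i t, 0 ≤ d i t) (hdM : ∀ i t, d i t ≤ M)
    (hC : ∀ i t', 0 ≤ C i t') (hA : ∀ i, 0 ≤ A i) (hh : ∀ i, 0 ≤ h i) :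
    sInf {z : ℝ | ∃ Q Y, lpFeasible P T L d M Q Y ∧ z = mipCost P T L C A h Q Y}
      = ∑ i ∈ Icc 1 P, ∑ t ∈ Icc (L i + 1) T, d i t *
          (insert 1 (Icc 1 (t - L i))).inf' (insert_nonempty _ _)
            (fun t' => C i t' + h i * ((t : ℝ) - (t' : ℝ)) + A i / M) := by
  classical
  have hM' : M ≠ 0 := ne_of_gt hM
  -- the base point 1 belongs to the Icc when t is in range
  have hmem1 : ∀ i t, t ∈ Icc (L i + 1) T → (1 : ℕ) ∈ Icc 1 (t - L i) := by
    intro i t ht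
    simp only [mem_Icc] at ht ⊢
    omega
  -- choose a minimizer for each (i,t)
  have hex : ∀ i t : ℕ, ∃ t' : ℕ, 1 ≤ t - L i →
      t' ∈ Icc 1 (t - L i) ∧
      ∀ s ∈ Icc 1 (t - L i),
        C i t' + h i * ((t : ℝ) - (t' : ℝ)) + A i / M ≤
          C i s + h i * ((t : ℝ) - (s : ℝ)) + A i / M := by
    intro i t
    by_cases h1 : 1 ≤ t - L i
    · obtain ⟨b, hb, hmin⟩ := Finset.exists_min_image (Icc 1 (t - L i))
        (fun s => C i s + h i * ((t : ℝ) - (s : ℝ)) + A i / M)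
        ⟨1, by simp [mem_Icc, h1]⟩
      exact ⟨b, fun _ => ⟨hb, hmin⟩⟩
    · exact ⟨1, fun hh' => absurd hh' h1⟩
  choose g hg using hex
  -- nonnegativity of the per-(i,t) minimum
  have hnn : ∀ i t, t ∈ Icc (L i + 1) T →
      0 ≤ (insert 1 (Icc 1 (t - L i))).inf' (insert_nonempty _ _)
        (fun t' => C i t' + h i * ((t : ℝ) - (t' : ℝ)) + A i / M) := by
    intro i t ht
    apply Finset.le_inf'
    intro b hb
    have hble : b ≤ t := by
      simp only [mem_insert, mem_Icc] at hb ht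
      omega
    have hcast : (b : ℝ) ≤ (t : ℝ) := Nat.cast_le.mpr hble
    have := hC i b
    have := hA i
    have h2 : 0 ≤ h i * ((t : ℝ) - (b : ℝ)) := mul_nonneg (hh i) (by linarith)
    have h3 : 0 ≤ A i / M := div_nonneg (hA i) hM.le
    linarith
  -- lower bound: every feasible cost is at least the claimed value
  have hlb : ∀ z ∈ {z : ℝ | ∃ Q Y, lpFeasible P T L d M Q Y ∧ z = mipCost P T L C A h Q Y},
      (∑ i ∈ Icc 1 P, ∑ t ∈ Icc (L i + 1) T, d i t *
          (insert 1 (Icc 1 (t - L i))).inf' (insert_nonempty _ _)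
            (fun t' => C i t' + h i * ((t : ℝ) - (t' : ℝ)) + A i / M)) ≤ z := by
    rintro z ⟨Q, Y, ⟨hQ0, hY, hcov, hQM⟩, rfl⟩
    unfold mipCost
    refine Finset.sum_le_sum fun i hi => Finset.sum_le_sum fun t ht => ?_
    have hnn' := hnn i t ht
    calc d i t * (insert 1 (Icc 1 (t - L i))).inf' (insert_nonempty _ _)
            (fun t' => C i t' + h i * ((t : ℝ) - (t' : ℝ)) + A i / M)
        ≤ (∑ t' ∈ Icc 1 (t - L i), Q i t t') *
            (insert 1 (Icc 1 (t - L i))).inf' (insert_nonempty _ _)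
            (fun t' => C i t' + h i * ((t : ℝ) - (t' : ℝ)) + A i / M) :=
          mul_le_mul_of_nonneg_right (hcov i hi t ht) hnn'
      _ = ∑ t' ∈ Icc 1 (t - L i), Q i t t' *
            (insert 1 (Icc 1 (t - L i))).inf' (insert_nonempty _ _)
            (fun t' => C i t' + h i * ((t : ℝ) - (t' : ℝ)) + A i / M) := by
          rw [Finset.sum_mul]
      _ ≤ ∑ t' ∈ Icc 1 (t - L i),
            (C i t' * Q i t t' + A i * Y i t t' + h i * ((t : ℝ) - (t' : ℝ)) * Q i t t') := by
          refine Finset.sum_le_sum fun t' ht' => ?_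
          have hstep1 : Q i t t' *
              (insert 1 (Icc 1 (t - L i))).inf' (insert_nonempty _ _)
                (fun t' => C i t' + h i * ((t : ℝ) - (t' : ℝ)) + A i / M)
              ≤ Q i t t' * (C i t' + h i * ((t : ℝ) - (t' : ℝ)) + A i / M) :=
            mul_le_mul_of_nonneg_left
              (Finset.inf'_le _ (mem_insert_of_mem ht')) (hQ0 i t t')
          have h2 : Q i t t' ≤ M * Y i t t' := hQM i hi t ht t' ht'
          have h3 : A i / M * Q i t t' ≤ A i * Y i t t' := by
            have h4 := mul_le_mul_of_nonneg_left h2 (div_nonneg (hA i) hM.le)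
            calc A i / M * Q i t t' ≤ A i / M * (M * Y i t t') := h4
              _ = A i * Y i t t' := by field_simp
          nlinarith [hstep1]
  -- the explicit value is attained
  have hmemS : (∑ i ∈ Icc 1 P, ∑ t ∈ Icc (L i + 1) T, d i t *
      (insert 1 (Icc 1 (t - L i))).inf' (insert_nonempty _ _)
        (fun t' => C i t' + h i * ((t : ℝ) - (t' : ℝ)) + A i / M)) ∈
      {z : ℝ | ∃ Q Y, lpFeasible P T L d M Q Y ∧ z = mipCost P T L C A h Q Y} := by
    refine ⟨fun i t t' => if t' = g i t then d i t else 0,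
            fun i t t' => if t' = g i t then d i t / M else 0, ?_, ?_⟩
    · refine ⟨?_, ?_, ?_, ?_⟩
      · intro i t t'
        dsimp only
        split_ifs
        · exact hd i t
        · exact le_refl 0
      · intro i t t'
        dsimp only
        constructor
        · split_ifs
          · exact div_nonneg (hd i t) hM.le
          · exact le_refl 0
        · split_ifs
          · rw [div_le_one hM]; exact hdM i t
          · exact zero_le_one
      · intro i hi t ht
        dsimp only
        have h1 : 1 ≤ t - L i := by
          simp only [mem_Icc] at ht; omega
        obtain ⟨hgmem, _⟩ := hg i t h1
        rw [Finset.sum_ite_eq' (Icc 1 (t - L i)) (g i t) (fun _ => d i t), if_pos hgmem]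
      · intro i hi t ht t' ht'
        dsimp only
        split_ifs
        · rw [mul_div_cancel₀ _ hM']
        · simp
    · unfold mipCost
      dsimp only
      refine Finset.sum_congr rfl fun i hi => Finset.sum_congr rfl fun t ht => ?_
      have h1 : 1 ≤ t - L i := by
        simp only [mem_Icc] at ht; omega
      obtain ⟨hgmem, hgmin⟩ := hg i t h1
      have hinf : (insert 1 (Icc 1 (t - L i))).inf' (insert_nonempty _ _)
          (fun t' => C i t' + h i * ((t : ℝ) - (t' : ℝ)) + A i / M)
          = C i (g i t) + h i * ((t : ℝ) - (g i t : ℝ)) + A i / M := by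
        refine le_antisymm (Finset.inf'_le _ (mem_insert_of_mem hgmem)) ?_
        refine Finset.le_inf' _ _ fun b hb => ?_
        rcases mem_insert.mp hb with rfl | hb
        · exact hgmin 1 (by simp [mem_Icc, h1])
        · exact hgmin b hb
      have hterm : ∀ t' ∈ Icc 1 (t - L i),
          (C i t' * (if t' = g i t then d i t else 0)
            + A i * (if t' = g i t then d i t / M else 0)
            + h i * ((t : ℝ) - (t' : ℝ)) * (if t' = g i t then d i t else 0))
          = (if t' = g i t then
              C i t' * d i t + A i * (d i t / M) + h i * ((t : ℝ) - (t' : ℝ)) * d i t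
            else 0) := by
        intro t' _
        split_ifs <;> ring
      rw [hinf, Finset.sum_congr rfl hterm,
        Finset.sum_ite_eq' (Icc 1 (t - L i)) (g i t), if_pos hgmem]
      field_simp
      ring
  exact le_antisymm (csInf_le ⟨_, fun z hz => hlb z hz⟩ hmemS) (le_csInf ⟨_, hmemS⟩ hlb)
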